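/- Let A ∈ ℂ^{m×N}, Δ : ℂ^m → ℂ^N, p ≥ 1, and n ∈ ℕ with 4n < N. If (A,Δ) is p–n–instance-optimal with constant C_N, i.e., ‖z − Δ(Az)‖_{ℓ_p} ≤ C_N σ_n(z)_{ℓ_p} for all z ∈ ℂ^N, then m ≥ n·log(N/(4n)) / (4·log(2C_N + 3)). -/

import Mathlib

open scoped BigOperators
open scoped Classical

/-- The `ℓ_p` norm of a finite complex vector. -/
noncomputable def lpNorm {ι : Type*} [Fintype ι] (p : ℝ) (v : ι → ℂ) : ℝ :=
  (∑ i, ‖v i‖ ^ p) ^ (1 / p)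

/-- Number of nonzero entries of a vector. -/
noncomputable def sparsity {ι : Type*} [Fintype ι] (v : ι → ℂ) : ℕ :=
  (Finset.univ.filter fun i => v i ≠ 0).card

/-- Best `n`-term approximation error of `v` in `ℓ_p`. -/
noncomputable def bestApprox {ι : Type*} [Fintype ι] (n : ℕ) (p : ℝ) (v : ι → ℂ) : ℝ :=
  sInf {t : ℝ | ∃ z : ι → ℂ, sparsity z ≤ n ∧ t = lpNorm p (v - z)}

/-- `A` satisfies the restricted isometry property of order `n` with constant `δ`. -/
def HasRIP {m : ℕ} {ι : Type*} [Fintype ι] (A : Matrix (Fin m) ι ℂ) (n : ℕ) (δ : ℝ) : Prop :=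
  ∀ v : ι → ℂ, sparsity v ≤ n →
    (1 - δ) * lpNorm 2 v ^ 2 ≤ lpNorm 2 (A.mulVec v) ^ 2 ∧
      lpNorm 2 (A.mulVec v) ^ 2 ≤ (1 + δ) * lpNorm 2 v ^ 2

/-- `A` satisfies the `ℓ₂`-robust null space property of order `n`
with constants `ρ` and `τ`. -/
def HasNSP {m : ℕ} {ι : Type*} [Fintype ι] (A : Matrix (Fin m) ι ℂ) (n : ℕ) (ρ τ : ℝ) : Prop :=
  ∀ (v : ι → ℂ) (S : Finset ι), S.card ≤ n →
    lpNorm 2 (fun i => if i ∈ S then v i else 0) ≤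
      ρ * (n : ℝ) ^ (-(1 : ℝ) / 2) * lpNorm 1 (fun i => if i ∈ S then 0 else v i) +
        τ * lpNorm 2 (A.mulVec v)

/-! Instance optimality of order `n` forces exact recovery of `n`-sparse vectors, hence the null
space property `‖v‖_p ≤ C ‖v_{Tᶜ}‖_p` for `v ∈ ker A` and `|T| ≤ 2n`. So for `n`-sparse `x, y`
the norm of `x - y` in the quotient `ℂ^N ⧸ ker A` is at least `‖x - y‖_p / (1 + C)`, and this
quotient is a real normed space of dimension at most `2m`. A greedy (Gilbert–Varshamov) code in
`[N/n]^n` with minimal distance `> (n - 1)/2` has at least `(N/4n)^{n/2}` words; sending a word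
`f` to the indicator of `{(i, f i)}` inside `[n] × [N/n] ⊆ [N]` gives `n`-sparse vectors of norm
`n^{1/p}` that are `n^{1/p}`-separated. Their images in the quotient are a
`n^{1/p}/(1 + C)`-packing of the ball of radius `n^{1/p}`, so by volume there are at most
`(2C + 3)^{2m}` of them. -/

open scoped ENNReal
open Module Matrix

section LpNorm

variable {ι : Type*} [Fintype ι] {p : ℝ}

theorem lpNorm_eq_norm_toLp (hp : 0 < p) (v : ι → ℂ) :
    lpNorm p v = ‖WithLp.toLp (ENNReal.ofReal p) v‖ := by
  rw [PiLp.norm_eq_sum (by rwa [ENNReal.toReal_ofReal hp.le])]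
  simp [lpNorm, ENNReal.toReal_ofReal hp.le]

theorem lpNorm_nonneg (v : ι → ℂ) : 0 ≤ lpNorm p v :=
  Real.rpow_nonneg (Finset.sum_nonneg fun _ _ => Real.rpow_nonneg (norm_nonneg _) _) _

theorem lpNorm_eq_zero_iff (hp : 1 ≤ p) {v : ι → ℂ} : lpNorm p v = 0 ↔ v = 0 := by
  have : Fact (1 ≤ ENNReal.ofReal p) := ⟨ENNReal.one_le_ofReal.2 hp⟩
  rw [lpNorm_eq_norm_toLp (by linarith), norm_eq_zero, WithLp.toLp_eq_zero]

theorem lpNorm_add_le (hp : 1 ≤ p) (u w : ι → ℂ) :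
    lpNorm p (u + w) ≤ lpNorm p u + lpNorm p w := by
  have : Fact (1 ≤ ENNReal.ofReal p) := ⟨ENNReal.one_le_ofReal.2 hp⟩
  simp only [lpNorm_eq_norm_toLp (by linarith : 0 < p), WithLp.toLp_add]
  exact norm_add_le _ _

theorem lpNorm_mono (hp : 0 ≤ p) {u w : ι → ℂ} (h : ∀ i, ‖u i‖ ≤ ‖w i‖) :
    lpNorm p u ≤ lpNorm p w := by
  unfold lpNorm
  gcongr with i
  exact h i

theorem lpNorm_neg (v : ι → ℂ) : lpNorm p (-v) = lpNorm p v := by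
  simp [lpNorm]

theorem lpNorm_indicator_le (hp : 0 ≤ p) (s : Set ι) (v : ι → ℂ) :
    lpNorm p (s.indicator v) ≤ lpNorm p v :=
  lpNorm_mono hp fun i => norm_indicator_le_norm_self v i

theorem card_rpow_le_lpNorm (hp : 0 < p) (T : Finset ι) {v : ι → ℂ} (hv : ∀ i ∈ T, 1 ≤ ‖v i‖) :
    (T.card : ℝ) ^ (1 / p) ≤ lpNorm p v := by
  unfold lpNorm
  gcongr
  calc (T.card : ℝ) = ∑ i ∈ T, 1 := by simp
    _ ≤ ∑ i ∈ T, ‖v i‖ ^ p := Finset.sum_le_sum fun i hi => Real.one_le_rpow (hv i hi) hp.le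
    _ ≤ ∑ i, ‖v i‖ ^ p :=
      Finset.sum_le_sum_of_subset_of_nonneg (Finset.subset_univ _) fun i _ _ => by positivity

theorem lpNorm_indicator_one (hp : 0 < p) (T : Finset ι) :
    lpNorm p ((T : Set ι).indicator 1) = (T.card : ℝ) ^ (1 / p) := by
  unfold lpNorm
  congr 1
  have (i : ι) : ‖(T : Set ι).indicator (1 : ι → ℂ) i‖ ^ p = (T : Set ι).indicator 1 i := by
    by_cases hi : i ∈ T <;> simp [hi, hp.ne']
  simp only [this, Finset.sum_indicator_subset _ (Finset.subset_univ T)]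
  simp

end LpNorm

section Sparse

variable {ι : Type*} [Fintype ι]

theorem sparsity_indicator_le (T : Finset ι) (v : ι → ℂ) :
    sparsity ((T : Set ι).indicator v) ≤ T.card :=
  Finset.card_le_card fun i hi => by
    by_contra hiT
    simp only [Finset.mem_filter, Set.indicator_apply_ne_zero] at hi
    exact hiT hi.2.1

theorem bestApprox_nonneg (n : ℕ) (p : ℝ) (v : ι → ℂ) : 0 ≤ bestApprox n p v :=
  Real.sInf_nonneg fun _ ⟨_, _, ht⟩ => ht ▸ lpNorm_nonneg _

theorem bestApprox_le_lpNorm_sub {n : ℕ} (p : ℝ) (v : ι → ℂ) {w : ι → ℂ} (hw : sparsity w ≤ n) :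
    bestApprox n p v ≤ lpNorm p (v - w) :=
  csInf_le ⟨0, fun _ ⟨_, _, ht⟩ => ht ▸ lpNorm_nonneg _⟩ ⟨w, hw, rfl⟩

end Sparse

def IsInstanceOptimal {m : ℕ} {ι : Type*} [Fintype ι] (A : Matrix (Fin m) ι ℂ)
    (Δ : (Fin m → ℂ) → ι → ℂ) (n : ℕ) (p C : ℝ) : Prop :=
  ∀ z : ι → ℂ, lpNorm p (z - Δ (A *ᵥ z)) ≤ C * bestApprox n p z

namespace IsInstanceOptimal

variable {m : ℕ} {ι : Type*} [Fintype ι] {A : Matrix (Fin m) ι ℂ} {Δ : (Fin m → ℂ) → ι → ℂ}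
  {n : ℕ} {p C : ℝ}

theorem apply_mulVec_eq (h : IsInstanceOptimal A Δ n p C) (hp : 1 ≤ p) {z : ι → ℂ}
    (hz : sparsity z ≤ n) : Δ (A *ᵥ z) = z := by
  have hσ : bestApprox n p z = 0 := by
    refine le_antisymm ?_ (bestApprox_nonneg n p z)
    simpa [(lpNorm_eq_zero_iff hp).2] using bestApprox_le_lpNorm_sub p z hz
  have := h z
  rw [hσ, mul_zero] at this
  exact (sub_eq_zero.1 ((lpNorm_eq_zero_iff hp).1 (le_antisymm this (lpNorm_nonneg _)))).symm

theorem lpNorm_le_of_mulVec_eq_zero (h : IsInstanceOptimal A Δ n p C) (hp : 1 ≤ p) (hC : 0 ≤ C)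
    {v : ι → ℂ} (hv : A *ᵥ v = 0) {T₁ T₂ : Finset ι} (hT₁ : T₁.card ≤ n) (hT₂ : T₂.card ≤ n) :
    lpNorm p v ≤ C * lpNorm p ((↑(T₁ ∪ T₂) : Set ι)ᶜ.indicator v) := by
  set z := -((T₁ : Set ι)ᶜ.indicator v) with hz
  have hAz : A *ᵥ z = A *ᵥ (T₁ : Set ι).indicator v := by
    rw [hz, Set.indicator_compl, Matrix.mulVec_neg, Matrix.mulVec_sub, hv, zero_sub, neg_neg]
  have hdec : z - Δ (A *ᵥ z) = -v := by
    rw [hAz, h.apply_mulVec_eq hp ((sparsity_indicator_le T₁ v).trans hT₁), hz,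
      Set.indicator_compl]
    abel
  have htail : z - (T₂ : Set ι).indicator z = -((↑(T₁ ∪ T₂) : Set ι)ᶜ.indicator v) := by
    rw [← Set.indicator_compl, hz, Set.indicator_neg', Set.indicator_indicator, Finset.coe_union,
      Set.compl_union, Set.inter_comm]
  calc lpNorm p v = lpNorm p (z - Δ (A *ᵥ z)) := by rw [hdec, lpNorm_neg]
    _ ≤ C * bestApprox n p z := h z
    _ ≤ C * lpNorm p ((↑(T₁ ∪ T₂) : Set ι)ᶜ.indicator v) := by
      refine mul_le_mul_of_nonneg_left ?_ hC
      calc bestApprox n p z ≤ lpNorm p (z - (T₂ : Set ι).indicator z) :=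
            bestApprox_le_lpNorm_sub p z ((sparsity_indicator_le T₂ z).trans hT₂)
        _ = _ := by rw [htail, lpNorm_neg]

theorem lpNorm_sub_le_of_mulVec_eq (h : IsInstanceOptimal A Δ n p C) (hp : 1 ≤ p) (hC : 0 ≤ C)
    {x y w : ι → ℂ} (hx : sparsity x ≤ n) (hy : sparsity y ≤ n) (hw : A *ᵥ w = A *ᵥ (x - y)) :
    lpNorm p (x - y) ≤ (1 + C) * lpNorm p w := by
  set T := Finset.univ.filter (fun i => x i ≠ 0) ∪ Finset.univ.filter (fun i => y i ≠ 0)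
  have hk : A *ᵥ (w - (x - y)) = 0 := by rw [Matrix.mulVec_sub, hw, sub_self]
  have htail : (T : Set ι)ᶜ.indicator (w - (x - y)) = (T : Set ι)ᶜ.indicator w := by
    refine Set.indicator_congr fun i hi => ?_
    simp_all [T]
  calc lpNorm p (x - y) = lpNorm p (w + -(w - (x - y))) := by rw [neg_sub, add_sub_cancel]
    _ ≤ lpNorm p w + lpNorm p (w - (x - y)) := by
      rw [← lpNorm_neg (w - (x - y))]; exact lpNorm_add_le hp _ _
    _ ≤ lpNorm p w + C * lpNorm p w := by
      gcongr
      calc lpNorm p (w - (x - y)) ≤ C * lpNorm p ((T : Set ι)ᶜ.indicator (w - (x - y))) :=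
            h.lpNorm_le_of_mulVec_eq_zero hp hC hk hx hy
        _ ≤ C * lpNorm p w := by
          rw [htail]; gcongr; exact lpNorm_indicator_le (by linarith) _ w
    _ = (1 + C) * lpNorm p w := by ring

end IsInstanceOptimal

section Packing

open Metric MeasureTheory

theorem card_le_of_norm_le_of_separated {E κ : Type*} [NormedAddCommGroup E] [NormedSpace ℝ E]
    [FiniteDimensional ℝ E] (S : Finset κ) (x : κ → E) {r δ : ℝ} (hr : 0 ≤ r) (hδ : 0 < δ)
    (hx : ∀ i ∈ S, ‖x i‖ ≤ r) (hsep : ∀ i ∈ S, ∀ j ∈ S, i ≠ j → δ ≤ ‖x i - x j‖) :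
    (S.card : ℝ) ≤ ((2 * r + δ) / δ) ^ finrank ℝ E := by
  borelize E
  set μ : Measure E := Measure.addHaar
  set d := finrank ℝ E
  have hdisj : Set.PairwiseDisjoint (S : Set κ) fun i => ball (x i) (δ / 2) :=
    fun i hi j hj hij => ball_disjoint_ball <| by
      rw [dist_eq_norm]; linarith [hsep i hi j hj hij]
  have hsub : (⋃ i ∈ S, ball (x i) (δ / 2)) ⊆ ball 0 (r + δ / 2) :=
    Set.iUnion₂_subset fun i hi => ball_subset_ball' <| by
      rw [dist_zero_right]; linarith [hx i hi]
  have hvol : (S.card : ℝ≥0∞) * ENNReal.ofReal ((δ / 2) ^ d) * μ (ball 0 1) ≤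
      ENNReal.ofReal ((r + δ / 2) ^ d) * μ (ball 0 1) := by
    have := measure_mono (μ := μ) hsub
    rw [measure_biUnion_finset hdisj fun _ _ => measurableSet_ball] at this
    simpa only [μ.addHaar_ball_of_pos _ (by positivity : 0 < δ / 2),
      μ.addHaar_ball_of_pos _ (by positivity : 0 < r + δ / 2), Finset.sum_const, nsmul_eq_mul,
      mul_assoc] using this
  have hvol' : (S.card : ℝ) * (δ / 2) ^ d ≤ (r + δ / 2) ^ d := by
    have := (ENNReal.mul_le_mul_iff_left (measure_ball_pos μ (0 : E) one_pos).ne'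
      measure_ball_lt_top.ne).1 hvol
    rw [← ENNReal.ofReal_natCast, ← ENNReal.ofReal_mul (by positivity)] at this
    exact (ENNReal.ofReal_le_ofReal_iff (by positivity)).1 this
  calc (S.card : ℝ) ≤ (r + δ / 2) ^ d / (δ / 2) ^ d := by
        rwa [le_div_iff₀ (by positivity)]
    _ = ((2 * r + δ) / δ) ^ d := by
        rw [← div_pow]; congr 1; field_simp

end Packing

theorem finrank_quotient_ker_le {K V W : Type*} [DivisionRing K] [AddCommGroup V] [Module K V]
    [AddCommGroup W] [Module K W] [FiniteDimensional K W] (f : V →ₗ[K] W) :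
    finrank K (V ⧸ LinearMap.ker f) ≤ finrank K W :=
  f.quotKerEquivRange.finrank_eq.trans_le (Submodule.finrank_le _)

namespace IsInstanceOptimal

variable {m : ℕ} {ι : Type*} [Fintype ι] {A : Matrix (Fin m) ι ℂ} {Δ : (Fin m → ℂ) → ι → ℂ}
  {n : ℕ} {p C : ℝ}

theorem card_le_of_separated (h : IsInstanceOptimal A Δ n p C) (hp : 1 ≤ p) (hC : 0 ≤ C)
    {κ : Type*} (S : Finset κ) (x : κ → ι → ℂ) {r : ℝ} (hr : 0 < r)
    (hsp : ∀ i ∈ S, sparsity (x i) ≤ n) (hx : ∀ i ∈ S, lpNorm p (x i) ≤ r)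
    (hsep : ∀ i ∈ S, ∀ j ∈ S, i ≠ j → r ≤ lpNorm p (x i - x j)) :
    (S.card : ℝ) ≤ (2 * C + 3) ^ (2 * m) := by
  have : Fact (1 ≤ ENNReal.ofReal p) := ⟨ENNReal.one_le_ofReal.2 hp⟩
  have hnorm (v : ι → ℂ) : lpNorm p v = ‖WithLp.toLp (ENNReal.ofReal p) v‖ :=
    lpNorm_eq_norm_toLp (by linarith) v
  let E := WithLp (ENNReal.ofReal p) (ι → ℂ)
  let Φ : E →ₗ[ℂ] Fin m → ℂ :=
    A.mulVecLin ∘ₗ (WithLp.linearEquiv (ENNReal.ofReal p) ℂ (ι → ℂ)).toLinearMap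
  let y (i : κ) : E ⧸ Φ.ker := Submodule.Quotient.mk (WithLp.toLp _ (x i))
  have : IsClosed (Φ.ker : Set E) := Submodule.closed_of_finiteDimensional _
  have hdim : finrank ℝ (E ⧸ Φ.ker) ≤ 2 * m := by
    rw [finrank_real_of_complex]
    simpa using Nat.mul_le_mul_left 2 (finrank_quotient_ker_le Φ)
  have hy : ∀ i ∈ S, ‖y i‖ ≤ r := fun i hi =>
    (Submodule.Quotient.norm_mk_le _ _).trans ((hnorm _).symm.trans_le (hx i hi))
  have hysep : ∀ i ∈ S, ∀ j ∈ S, i ≠ j → r / (1 + C) ≤ ‖y i - y j‖ := by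
    intro i hi j hj hij
    rw [← Submodule.Quotient.mk_sub, ← WithLp.toLp_sub]
    refine QuotientAddGroup.le_norm_iff.2 fun w hw => ?_
    have hΦ : A *ᵥ w.ofLp = A *ᵥ (x i - x j) :=
      LinearMap.sub_mem_ker_iff.1 ((Submodule.Quotient.eq _).1 hw)
    rw [div_le_iff₀ (by linarith), mul_comm, ← hnorm]
    exact (hsep i hi j hj hij).trans
      (h.lpNorm_sub_le_of_mulVec_eq hp hC (hsp i hi) (hsp j hj) hΦ)
  calc (S.card : ℝ) ≤ ((2 * r + r / (1 + C)) / (r / (1 + C))) ^ finrank ℝ (E ⧸ Φ.ker) :=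
        card_le_of_norm_le_of_separated S y hr.le (by positivity) hy hysep
    _ = (2 * C + 3) ^ finrank ℝ (E ⧸ Φ.ker) := by
        congr 1; field_simp; ring
    _ ≤ (2 * C + 3) ^ (2 * m) := pow_le_pow_right₀ (by linarith) hdim

end IsInstanceOptimal

section HammingCode

variable {α β : Type*} [Fintype α] [Fintype β] [DecidableEq β]

theorem card_hammingBall_le [Nontrivial β] (f : α → β) (e : ℕ) :
    (Finset.univ.filter fun g : α → β => hammingDist g f ≤ e).card ≤
      2 ^ Fintype.card α * (Fintype.card β - 1) ^ e := by
  set box : Finset α → Finset (α → β) := fun D =>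
    Fintype.piFinset fun a => if a ∈ D then Finset.univ.erase (f a) else {f a}
  have hcover : (Finset.univ.filter fun g : α → β => hammingDist g f ≤ e) ⊆
      (Finset.univ.filter fun D : Finset α => D.card ≤ e).biUnion box := by
    intro g hg
    rw [Finset.mem_filter] at hg
    refine Finset.mem_biUnion.2 ⟨Finset.univ.filter fun a => g a ≠ f a,
      Finset.mem_filter.2 ⟨Finset.mem_univ _, hg.2⟩, ?_⟩
    rw [Fintype.mem_piFinset]
    intro a
    by_cases ha : g a = f a <;> simp [ha]
  have hbox (D : Finset α) (hD : D ∈ Finset.univ.filter fun D : Finset α => D.card ≤ e) :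
      (box D).card ≤ (Fintype.card β - 1) ^ e := by
    rw [Finset.mem_filter] at hD
    calc (box D).card = (Fintype.card β - 1) ^ D.card := by
          simp only [box, Fintype.card_piFinset, apply_ite Finset.card, Finset.card_erase_of_mem
            (Finset.mem_univ _), Finset.card_univ, Finset.card_singleton]
          rw [Finset.prod_ite_mem, Finset.univ_inter, Finset.prod_const]
      _ ≤ (Fintype.card β - 1) ^ e :=
          Nat.pow_le_pow_right (Nat.sub_pos_of_lt Fintype.one_lt_card) hD.2
  calc _ ≤ _ := Finset.card_le_card hcover
    _ ≤ ∑ D ∈ Finset.univ.filter fun D : Finset α => D.card ≤ e, (box D).card :=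
        Finset.card_biUnion_le
    _ ≤ (Finset.univ.filter fun D : Finset α => D.card ≤ e).card * (Fintype.card β - 1) ^ e :=
        Finset.sum_le_card_nsmul _ _ _ hbox
    _ ≤ 2 ^ Fintype.card α * (Fintype.card β - 1) ^ e := by
        gcongr
        simpa using Finset.card_filter_le (Finset.univ : Finset (Finset α)) _

theorem exists_maximal_code (e : ℕ) :
    ∃ S : Finset (α → β), (∀ f ∈ S, ∀ g ∈ S, f ≠ g → e < hammingDist f g) ∧
      ∀ g, ∃ f ∈ S, hammingDist g f ≤ e := by
  let IsCode (S : Finset (α → β)) : Prop := ∀ f ∈ S, ∀ g ∈ S, f ≠ g → e < hammingDist f g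
  obtain ⟨S, hS, hmax⟩ := Finset.exists_max_image (Finset.univ.filter IsCode) Finset.card
    ⟨∅, by simp [IsCode]⟩
  rw [Finset.mem_filter] at hS
  refine ⟨S, hS.2, fun g => ?_⟩
  by_contra! hfar
  have hg : g ∉ S := fun hg => by simpa using hfar g hg
  have hcode : IsCode (insert g S) := by
    simp only [IsCode, Finset.mem_insert]
    rintro f (rfl | hf) f' (rfl | hf') hne
    · exact absurd rfl hne
    · exact hfar f' hf'
    · rw [hammingDist_comm]; exact hfar f hf
    · exact hS.2 f hf f' hf' hne
  have := hmax (insert g S) (by simpa using hcode)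
  rw [Finset.card_insert_of_notMem hg] at this
  omega

theorem exists_code_card_mul_ge [Nontrivial β] (e : ℕ) :
    ∃ S : Finset (α → β), (∀ f ∈ S, ∀ g ∈ S, f ≠ g → e < hammingDist f g) ∧
      Fintype.card β ^ Fintype.card α ≤
        S.card * (2 ^ Fintype.card α * (Fintype.card β - 1) ^ e) := by
  obtain ⟨S, hsep, hcov⟩ := exists_maximal_code (α := α) (β := β) e
  refine ⟨S, hsep, ?_⟩
  calc Fintype.card β ^ Fintype.card α = (Finset.univ : Finset (α → β)).card := by simp
    _ ≤ (S.biUnion fun f => Finset.univ.filter fun g => hammingDist g f ≤ e).card :=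
        Finset.card_le_card fun g _ => by
          obtain ⟨f, hf, hgf⟩ := hcov g
          exact Finset.mem_biUnion.2 ⟨f, hf, by simpa using hgf⟩
    _ ≤ ∑ f ∈ S, (Finset.univ.filter fun g => hammingDist g f ≤ e).card := Finset.card_biUnion_le
    _ ≤ S.card * (2 ^ Fintype.card α * (Fintype.card β - 1) ^ e) :=
        Finset.sum_le_card_nsmul _ _ _ fun f _ => card_hammingBall_le f e

end HammingCode

section CodeVectors

variable {α β ι : Type*} [Fintype α]

noncomputable def graphFinset (e : α × β ↪ ι) (f : α → β) : Finset ι :=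
  Finset.univ.image fun a => e (a, f a)

theorem card_graphFinset (e : α × β ↪ ι) (f : α → β) :
    (graphFinset e f).card = Fintype.card α :=
  Finset.card_image_of_injective _ fun _ _ h => congrArg Prod.fst (e.injective h)

theorem mem_graphFinset {e : α × β ↪ ι} {f : α → β} {a : α} {b : β} :
    e (a, b) ∈ graphFinset e f ↔ f a = b := by
  simp [graphFinset, e.injective.eq_iff]

variable [DecidableEq β]

theorem hammingDist_le_card_graphFinset_sdiff (e : α × β ↪ ι) (f g : α → β) :
    hammingDist f g ≤ (graphFinset e f \ graphFinset e g).card := by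
  refine Finset.card_le_card_of_injOn (fun a => e (a, f a)) (fun a ha => ?_)
    fun _ _ _ _ h => congrArg Prod.fst (e.injective h)
  simp only [Finset.coe_filter, Finset.mem_univ, true_and, Set.mem_ofPred_eq] at ha
  simp [mem_graphFinset, Ne.symm ha]

variable [Fintype ι] {p : ℝ}

theorem card_rpow_le_lpNorm_indicator_sub (hp : 0 < p) (e : α × β ↪ ι) {f g : α → β}
    (hfg : Fintype.card α ≤ 2 * hammingDist f g) :
    (Fintype.card α : ℝ) ^ (1 / p) ≤
      lpNorm p ((graphFinset e f : Set ι).indicator 1 - (graphFinset e g : Set ι).indicator 1) := by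
  set T := (graphFinset e f \ graphFinset e g) ∪ (graphFinset e g \ graphFinset e f)
  have hT : Fintype.card α ≤ T.card := by
    rw [Finset.card_union_of_disjoint disjoint_sdiff_sdiff]
    have := hammingDist_le_card_graphFinset_sdiff e f g
    have := hammingDist_le_card_graphFinset_sdiff e g f
    rw [hammingDist_comm] at this
    omega
  calc (Fintype.card α : ℝ) ^ (1 / p) ≤ (T.card : ℝ) ^ (1 / p) := by gcongr
    _ ≤ _ := card_rpow_le_lpNorm hp T fun i hi => by
        rcases Finset.mem_union.1 hi with hi | hi <;>
          simp_all [Finset.mem_sdiff]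

theorem IsInstanceOptimal.card_code_le {m n : ℕ} {A : Matrix (Fin m) ι ℂ}
    {Δ : (Fin m → ℂ) → ι → ℂ} {C : ℝ} (h : IsInstanceOptimal A Δ n p C) (hp : 1 ≤ p)
    (hC : 0 ≤ C) [Nonempty α] (hα : Fintype.card α ≤ n) (e : α × β ↪ ι) (S : Finset (α → β))
    (hS : ∀ f ∈ S, ∀ g ∈ S, f ≠ g → Fintype.card α ≤ 2 * hammingDist f g) :
    (S.card : ℝ) ≤ (2 * C + 3) ^ (2 * m) := by
  have hp0 : 0 < p := by linarith
  refine h.card_le_of_separated hp hC S (fun f => (graphFinset e f : Set ι).indicator 1)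
    (r := (Fintype.card α : ℝ) ^ (1 / p)) (by positivity) (fun f _ => ?_) (fun f _ => ?_)
    fun f hf g hg hfg => card_rpow_le_lpNorm_indicator_sub hp0 e (hS f hf g hg hfg)
  · exact (sparsity_indicator_le _ _).trans ((card_graphFinset e f).trans_le hα)
  · rw [lpNorm_indicator_one hp0, card_graphFinset]

end CodeVectors

theorem succ_pow_mul_pred_pow_le {v n e : ℕ} (hv : 2 ≤ v) (he : 2 * e < n) :
    (v + 1) ^ n * (v - 1) ^ (2 * e) ≤ v ^ (2 * n) := by
  obtain ⟨k, rfl⟩ : ∃ k, n = k + 1 := ⟨n - 1, by omega⟩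
  obtain ⟨w, rfl⟩ : ∃ w, v = w + 1 := ⟨v - 1, by omega⟩
  rw [Nat.add_sub_cancel]
  calc (w + 1 + 1) ^ (k + 1) * w ^ (2 * e) ≤ (w + 1 + 1) ^ (k + 1) * w ^ k := by
        gcongr <;> omega
    _ = (w + 2) * ((w + 2) * w) ^ k := by rw [mul_pow, pow_succ]; ring
    _ ≤ (w + 1) ^ 2 * ((w + 1) ^ 2) ^ k := by gcongr <;> nlinarith
    _ = (w + 1) ^ (2 * (k + 1)) := by rw [← pow_mul, ← pow_add]; ring_nf

theorem succ_pow_le_four_pow_mul_sq {v n e L : ℕ} (hv : 2 ≤ v) (he : 2 * e < n)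
    (hL : v ^ n ≤ L * (2 ^ n * (v - 1) ^ e)) : (v + 1) ^ n ≤ 4 ^ n * L ^ 2 := by
  have hpos : 0 < (2 ^ n * (v - 1) ^ e) ^ 2 := by
    have : 0 < v - 1 := by omega
    positivity
  refine Nat.le_of_mul_le_mul_right ?_ hpos
  calc (v + 1) ^ n * (2 ^ n * (v - 1) ^ e) ^ 2
        = 4 ^ n * ((v + 1) ^ n * (v - 1) ^ (2 * e)) := by
          rw [show (4 : ℕ) ^ n = (2 ^ n) ^ 2 by rw [← pow_mul, mul_comm, pow_mul]; norm_num]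
          ring
    _ ≤ 4 ^ n * (v ^ n) ^ 2 := by
          rw [← pow_mul, mul_comm n]; gcongr; exact succ_pow_mul_pred_pow_le hv he
    _ ≤ 4 ^ n * (L * (2 ^ n * (v - 1) ^ e)) ^ 2 := by gcongr
    _ = 4 ^ n * L ^ 2 * (2 ^ n * (v - 1) ^ e) ^ 2 := by ring

theorem div_four_mul_pow_le_sq {N n v L : ℕ} (hNv : N ≤ n * (v + 1))
    (hL : (v + 1) ^ n ≤ 4 ^ n * L ^ 2) : ((N : ℝ) / (4 * n)) ^ n ≤ (L : ℝ) ^ 2 := by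
  have hNv' : (N : ℝ) ≤ n * (v + 1) := by exact_mod_cast hNv
  have hN : (N : ℝ) / (4 * n) ≤ (v + 1) / 4 :=
    div_le_of_le_mul₀ (by positivity) (by positivity) (by linarith)
  calc ((N : ℝ) / (4 * n)) ^ n ≤ ((v + 1) / 4) ^ n := by gcongr
    _ = (v + 1) ^ n / 4 ^ n := div_pow _ _ _
    _ ≤ (L : ℝ) ^ 2 := by
        rw [div_le_iff₀ (by positivity), mul_comm]
        exact_mod_cast hL

theorem mul_log_div_le_of_pow_le_pow {x y : ℝ} {n k : ℕ} (hx : 0 < x) (hy : 1 < y)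
    (h : x ^ n ≤ y ^ (4 * k)) : n * Real.log x / (4 * Real.log y) ≤ k := by
  have hlog := Real.log_le_log (by positivity) h
  rw [Real.log_pow, Real.log_pow] at hlog
  rw [div_le_iff₀ (by have := Real.log_pos hy; positivity)]
  push_cast at hlog
  linarith

/-- **Lower bound on the number of measurements for `p`–`n`–instance optimality**
(modification of Foucart–Rauhut, Thm. 11.6).  If `‖z − Δ(Az)‖_p ≤ C_N σ_n(z)_p`
for all `z ∈ ℂ^N`, then `m ≥ n log(N/4n) / (4 log(2 C_N + 3))`. -/
theorem stmt10 {m N : ℕ} (n : ℕ) (hn : 0 < n) (hN : 4 * n < N) (p : ℝ) (hp : 1 ≤ p)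
    (A : Matrix (Fin m) (Fin N) ℂ) (Δ : (Fin m → ℂ) → Fin N → ℂ) (CN : ℝ) (hC : 0 < CN)
    (h : ∀ z : Fin N → ℂ, lpNorm p (z - Δ (A.mulVec z)) ≤ CN * bestApprox n p z) :
    (m : ℝ) ≥ n * Real.log ((N : ℝ) / (4 * n)) / (4 * Real.log (2 * CN + 3)) := by
  have hopt : IsInstanceOptimal A Δ n p CN := h
  set v := N / n
  have hv : 4 ≤ v := (Nat.le_div_iff_mul_le hn).2 (by omega)
  have : Nontrivial (Fin v) := Fin.nontrivial_iff_two_le.2 (by omega)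
  have : Nonempty (Fin n) := ⟨⟨0, hn⟩⟩
  obtain ⟨S, hsep, hcard⟩ := exists_code_card_mul_ge (α := Fin n) (β := Fin v) ((n - 1) / 2)
  obtain ⟨emb⟩ : Nonempty (Fin n × Fin v ↪ Fin N) :=
    Function.Embedding.nonempty_of_card_le (by simpa using Nat.mul_div_le N n)
  have hdist : ∀ f ∈ S, ∀ g ∈ S, f ≠ g → Fintype.card (Fin n) ≤ 2 * hammingDist f g :=
    fun f hf g hg hfg => by
      have := hsep f hf g hg hfg
      rw [Fintype.card_fin]; omega
  have hS := hopt.card_code_le hp hC.le (by simp) emb S hdist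
  have hcount : (v + 1) ^ n ≤ 4 ^ n * S.card ^ 2 :=
    succ_pow_le_four_pow_mul_sq (e := (n - 1) / 2) (by omega) (by omega) (by simpa using hcard)
  have hN0 : (0 : ℝ) < N := by exact_mod_cast (by omega : 0 < N)
  refine mul_log_div_le_of_pow_le_pow (div_pos hN0 (by positivity)) (by linarith) ?_
  calc ((N : ℝ) / (4 * n)) ^ n ≤ (S.card : ℝ) ^ 2 :=
        div_four_mul_pow_le_sq (Nat.lt_mul_div_succ N hn).le hcount
    _ ≤ ((2 * CN + 3) ^ (2 * m)) ^ 2 := by gcongr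
    _ = (2 * CN + 3) ^ (4 * m) := by ring
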